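/- For every integer x ≥ 1, M(x) = G⁻¹(x) + ∑_{p ≤ x, p prime} G⁻¹(⌊x/p⌋). -/

import Mathlib

/-!
Write `g = ζ * (ε + 𝟙_ℙ)`, where `𝟙_ℙ` is the indicator of the primes: indeed
`∑_{d ∣ n} (ε + 𝟙_ℙ)(d) = 1 + ω(n)`. Since `μ * ζ = ε`, the identity `g * g⁻¹ = ε` gives
`μ = (ε + 𝟙_ℙ) * g⁻¹ = g⁻¹ + 𝟙_ℙ * g⁻¹`, and summing a Dirichlet convolution `f * h` up to `x`
gives `∑_{d ≤ x} f(d) H(⌊x/d⌋)` with `H` the summatory function of `h`.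
-/

open Finset ArithmeticFunction
open scoped ArithmeticFunction.zeta ArithmeticFunction.Moebius ArithmeticFunction.omega

namespace ArithmeticFunction

variable {R : Type*} [Semiring R]

def primeIndicator : ArithmeticFunction R :=
  ⟨fun n => if n.Prime then 1 else 0, by simp [Nat.not_prime_zero]⟩

@[simp]
theorem primeIndicator_apply (n : ℕ) :
    (primeIndicator : ArithmeticFunction R) n = if n.Prime then 1 else 0 :=
  rfl

theorem coe_zeta_mul_primeIndicator :
    (ζ : ArithmeticFunction R) * primeIndicator = (ω : ArithmeticFunction R) := by
  ext n
  rw [coe_zeta_mul_apply, natCoe_apply, cardDistinctFactors_apply, ← List.card_toFinset,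
    ← Nat.primeFactors, Nat.primeFactors_eq_to_filter_divisors_prime]
  simp only [primeIndicator_apply, sum_boole]

theorem sum_Ioc_primeIndicator_mul (f : ArithmeticFunction R) (N : ℕ) :
    ∑ n ∈ Ioc 0 N, (primeIndicator * f : ArithmeticFunction R) n =
      ∑ p ∈ Ioc 0 N with p.Prime, ∑ m ∈ Ioc 0 (N / p), f m := by
  rw [sum_Ioc_mul_eq_sum_sum, sum_filter]
  simp only [primeIndicator_apply, ite_mul, one_mul, zero_mul]

end ArithmeticFunction

theorem stmt_13_general (g ginv : ArithmeticFunction ℝ)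
    (hg : ∀ n : ℕ, 0 < n → g n = (ArithmeticFunction.cardDistinctFactors n : ℝ) + 1)
    (hginv : g * ginv = 1) (x : ℕ) :
    ((∑ n ∈ Finset.Icc 1 x, ArithmeticFunction.moebius n : ℤ) : ℝ) =
      (∑ n ∈ Finset.Icc 1 x, ginv n) +
        ∑ p ∈ (Finset.Icc 1 x).filter Nat.Prime, ∑ n ∈ Finset.Icc 1 (x / p), ginv n := by
  have hg_eq : g = (ζ : ArithmeticFunction ℝ) * (1 + primeIndicator) := by
    rw [mul_add, mul_one, coe_zeta_mul_primeIndicator]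
    ext n
    rcases n.eq_zero_or_pos with rfl | hn
    · simp
    · simp [hg n hn, natCoe_apply, zeta_apply, hn.ne', add_comm]
  have hμ : (μ : ArithmeticFunction ℝ) = (1 + primeIndicator) * ginv :=
    left_inv_eq_right_inv coe_moebius_mul_coe_zeta (by rw [← mul_assoc, ← hg_eq, hginv])
  have hM : ((∑ n ∈ Ioc 0 x, μ n : ℤ) : ℝ) = ∑ n ∈ Ioc 0 x, (μ : ArithmeticFunction ℝ) n := by
    simp [intCoe_apply]
  have hIcc (N : ℕ) : Icc 1 N = Ioc 0 N := Icc_add_one_left_eq_Ioc 0 N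
  simp only [hIcc]
  rw [hM, hμ, add_mul, one_mul]
  simp only [ArithmeticFunction.add_apply, sum_add_distrib, sum_Ioc_primeIndicator_mul]

/-- Let `g` be the arithmetic function with `g(n) = ω(n) + 1` for `n ≥ 1`,
let `ginv` be its Dirichlet inverse (characterized by `g * ginv = 1`), and let
`G⁻¹(x) = ∑_{n ≤ x} ginv(n)`.  Then for every `x ≥ 1`,
`M(x) = G⁻¹(x) + ∑_{p ≤ x, p prime} G⁻¹(⌊x/p⌋)`, where `M` is the Mertens function. -/
theorem stmt_13 (g ginv : ArithmeticFunction ℝ)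
    (hg : ∀ n : ℕ, 0 < n → g n = (ArithmeticFunction.cardDistinctFactors n : ℝ) + 1)
    (hginv : g * ginv = 1) (x : ℕ) (hx : 1 ≤ x) :
    ((∑ n ∈ Finset.Icc 1 x, ArithmeticFunction.moebius n : ℤ) : ℝ) =
      (∑ n ∈ Finset.Icc 1 x, ginv n) +
        ∑ p ∈ (Finset.Icc 1 x).filter Nat.Prime, ∑ n ∈ Finset.Icc 1 (x / p), ginv n :=
  stmt_13_general g ginv hg hginv x
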